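/- Let m(r) = r·√(tanh(r)/r) with K(r) = √(tanh(r)/r). Then for all r > 0, m''(r) = -(1/(4r))·[4r²·K(r)·sech²(r) + K(r)^(-3)·(K(r)² − sech²(r))²]. -/

import Mathlib

noncomputable def K (r : ℝ) : ℝ := Real.sqrt (Real.tanh r / r)

noncomputable def m (r : ℝ) : ℝ := r * K r

/-! On `r > 0` we have `m r = √(r tanh r)`, so `m' = (tanh r + r sech² r) / (2 m)` there, and the
quotient rule gives `m''`. Substituting `tanh r = r K²` and `m = r K` turns it into the stated
rational expression in `K` and `sech²`. -/

open Real Filter Topology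

namespace Real

theorem tanh_pos {x : ℝ} (hx : 0 < x) : 0 < tanh x := by
  rw [tanh_eq_sinh_div_cosh]
  exact div_pos (sinh_pos_iff.2 hx) (cosh_pos x)

theorem hasDerivAt_tanh (x : ℝ) : HasDerivAt tanh ((cosh x)⁻¹ ^ 2) x := by
  have hc : cosh x ≠ 0 := (cosh_pos x).ne'
  have h := (hasDerivAt_sinh x).div (hasDerivAt_cosh x) hc
  rw [show tanh = fun y => sinh y / cosh y from funext tanh_eq_sinh_div_cosh]
  refine h.congr_deriv ?_
  field_simp
  linear_combination cosh_sq_sub_sinh_sq x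

theorem hasDerivAt_inv_cosh_sq (x : ℝ) :
    HasDerivAt (fun y => (cosh y)⁻¹ ^ 2) (-2 * tanh x * (cosh x)⁻¹ ^ 2) x := by
  have hc : cosh x ≠ 0 := (cosh_pos x).ne'
  refine (((hasDerivAt_cosh x).fun_inv hc).fun_pow 2).congr_deriv ?_
  rw [tanh_eq_sinh_div_cosh]
  push_cast
  field_simp

end Real

theorem hasDerivAt_tanh_add_mul_inv_cosh_sq (x : ℝ) :
    HasDerivAt (fun y => tanh y + y * (cosh y)⁻¹ ^ 2)
      (2 * (cosh x)⁻¹ ^ 2 * (1 - x * tanh x)) x := by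
  refine ((hasDerivAt_tanh x).add ((hasDerivAt_id x).mul (hasDerivAt_inv_cosh_sq x))).congr_deriv ?_
  simp only [id]
  ring

section WaveSpeed

variable {r : ℝ}

theorem K_pos (hr : 0 < r) : 0 < K r :=
  sqrt_pos.2 (div_pos (tanh_pos hr) hr)

theorem tanh_eq_mul_K_sq (hr : 0 < r) : tanh r = r * K r ^ 2 := by
  rw [K, sq_sqrt (div_pos (tanh_pos hr) hr).le]
  field_simp

theorem m_eq_sqrt_mul_tanh (hr : 0 < r) : m r = √(r * tanh r) := by
  rw [tanh_eq_mul_K_sq hr, m, show r * (r * K r ^ 2) = (r * K r) ^ 2 by ring,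
    sqrt_sq (mul_pos hr (K_pos hr)).le]

theorem hasDerivAt_m (hr : 0 < r) :
    HasDerivAt m ((tanh r + r * (cosh r)⁻¹ ^ 2) / (2 * m r)) r := by
  have hpos : 0 < r * tanh r := mul_pos hr (tanh_pos hr)
  have h := ((hasDerivAt_id r).mul (hasDerivAt_tanh r)).sqrt hpos.ne'
  simp only [id, one_mul] at h
  rw [m_eq_sqrt_mul_tanh hr]
  refine h.congr_of_eventuallyEq ?_
  filter_upwards [Ioi_mem_nhds hr] with y hy
  exact m_eq_sqrt_mul_tanh hy

theorem deriv_m_eventuallyEq (hr : 0 < r) :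
    deriv m =ᶠ[𝓝 r] fun y => (tanh y + y * (cosh y)⁻¹ ^ 2) / (2 * m y) := by
  filter_upwards [Ioi_mem_nhds hr] with y hy
  exact (hasDerivAt_m hy).deriv

end WaveSpeed

theorem whitham_second_derivative_formula :
    ∀ r : ℝ, 0 < r →
      deriv (deriv m) r = -(1 / (4 * r)) *
        (4 * r ^ 2 * K r * (Real.cosh r)⁻¹ ^ 2 +
          ((K r) ^ 3)⁻¹ * ((K r) ^ 2 - (Real.cosh r)⁻¹ ^ 2) ^ 2) := by
  intro r hr
  have hm : 2 * m r ≠ 0 := by rw [m]; have := K_pos hr; positivity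
  have h := (hasDerivAt_tanh_add_mul_inv_cosh_sq r).fun_div ((hasDerivAt_m hr).const_mul 2) hm
  rw [(deriv_m_eventuallyEq hr).deriv_eq, h.deriv, tanh_eq_mul_K_sq hr, m]
  have := K_pos hr
  have := (cosh_pos r).ne'
  field_simp
  ring
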